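/- arXiv:2201.06178 — 4 statements merged into one kernel-verified Lean document; each statement's English description precedes it below -/
import Mathlib

section
/- Let H be a Hilbert space, 𝔸 + 𝔹 + τ𝕂 : H → H invertible for some fixed τ > 0, and let ℛ : L²(∂D∖Γ) → L²(∂D∖Γ) map θ to the trace h_θ|_{∂D∖Γ} where h_θ solves ((𝔸+𝔹+τ𝕂)h_θ, φ) = ∫_{∂D∖Γ} θ φ̄ dS for all φ ∈ H. Then λ ∈ ℂ is an eigenvalue of the problem (𝔸+𝔹+λ𝕂)h = 0, h ≠ 0, if and only if (−λ+τ)ℛθ = θ for some nonzero θ ∈ L²(∂D∖Γ); i.e. 1/(τ−λ) is an eigenvalue of the compact operator ℛ. -/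
/-!
Write `T = 𝔸 + 𝔹 + τ𝕂`, so that `(𝔸 + 𝔹 + λ𝕂)h = 0` reads `T h = (τ - λ) 𝕂 h`. The variational
identities say `𝕂 = t* t` and `T S = t*` for the trace map `t`. Hence the trace `θ = t h` of an
eigenfunction is a fixed point of `(τ - λ) ℛ` (apply `T⁻¹` and then `t`), and conversely
`h = (τ - λ) S θ` is an eigenfunction with trace `θ`; injectivity of `T` keeps `θ` and `h`
nonzero together. `ℛ = t S` is compact because `t` is.
-/

theorem exists_ne_zero_apply_eq_smul_iff_exists_ne_zero_smul_eq {R E F : Type*} [Semiring R]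
    [AddCommMonoid E] [Module R E] [AddCommMonoid F] [Module R F]
    {T K : E →ₗ[R] E} {t : E →ₗ[R] F} {S a : F →ₗ[R] E}
    (hT : Function.Injective T) (hK : ∀ x, K x = a (t x)) (hTS : ∀ θ, T (S θ) = a θ)
    (μ : R) :
    (∃ x, x ≠ 0 ∧ T x = μ • K x) ↔ ∃ θ, θ ≠ 0 ∧ μ • t (S θ) = θ := by
  constructor
  · rintro ⟨x, hx, hTx⟩
    have hSt : μ • S (t x) = x := hT <| by rw [map_smul, hTS, ← hK, hTx]
    refine ⟨t x, fun htx => hx (hT ?_), by rw [← map_smul, hSt]⟩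
    rw [hTx, hK, htx, map_zero, map_zero, smul_zero]
  · rintro ⟨θ, hθ, hfix⟩
    have htx : t (μ • S θ) = θ := by rw [map_smul, hfix]
    refine ⟨μ • S θ, fun hx => hθ ?_, ?_⟩
    · rw [← htx, hx, map_zero]
    · rw [map_smul, hTS, hK, htx]

theorem LinearMap.add_smul_apply_eq_zero_iff {R E : Type*} [CommRing R] [AddCommGroup E]
    [Module R E] (L K : E →ₗ[R] E) (c d : R) (x : E) :
    (L + c • K) x = 0 ↔ (L + d • K) x = (d - c) • K x := by
  rw [← sub_eq_zero (b := (d - c) • K x), add_apply, add_apply, smul_apply, smul_apply,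
    sub_smul]
  abel_nf

theorem ContinuousLinearMap.apply_eq_adjoint_apply_of_inner {𝕜 E H G : Type*} [RCLike 𝕜]
    [NormedAddCommGroup H] [InnerProductSpace 𝕜 H] [CompleteSpace H]
    [NormedAddCommGroup G] [InnerProductSpace 𝕜 G] [CompleteSpace G]
    (t : H →L[𝕜] G) {U : E → H} {V : E → G}
    (h : ∀ x φ, inner 𝕜 φ (U x) = inner 𝕜 (t φ) (V x)) (x : E) :
    U x = adjoint t (V x) :=
  ext_inner_left 𝕜 fun φ => by rw [h, adjoint_inner_right]

theorem stmt_5_general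
    {H G : Type*} [NormedAddCommGroup H] [InnerProductSpace ℂ H] [CompleteSpace H]
    [NormedAddCommGroup G] [InnerProductSpace ℂ G] [CompleteSpace G]
    (A B K : H →L[ℂ] H)
    (t : H →L[ℂ] G)  -- trace map V₀(D) → L²(∂D∖Γ), compact
    (ht : IsCompactOperator ⇑t)
    (hKdef : ∀ h φ : H, (inner ℂ φ (K h) : ℂ) = (inner ℂ (t φ) (t h) : ℂ))
    (τ : ℝ)
    (Tinv : H →L[ℂ] H)
    (hTinv₁ : Tinv.comp (A + B + (τ : ℂ) • K) = ContinuousLinearMap.id ℂ H)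
    (S : G →L[ℂ] H)  -- solution operator θ ↦ h_θ
    (hS : ∀ (θ : G) (φ : H),
      (inner ℂ φ ((A + B + (τ : ℂ) • K) (S θ)) : ℂ) = (inner ℂ (t φ) θ : ℂ))
    (R : G →L[ℂ] G) (hR : R = t.comp S) :  -- ℛ : θ ↦ h_θ|_{∂D∖Γ}
    IsCompactOperator ⇑R ∧
    ∀ lam : ℂ,
      (∃ h : H, h ≠ 0 ∧ (A + B + lam • K) h = 0) ↔
      (∃ θ : G, θ ≠ 0 ∧ ((τ : ℂ) - lam) • R θ = θ) := by
  subst hR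
  refine ⟨ht.comp_clm S, fun lam => ?_⟩
  have hK := t.apply_eq_adjoint_apply_of_inner hKdef
  have hTS := t.apply_eq_adjoint_apply_of_inner (V := id) hS
  have hT : Function.Injective (A + B + (τ : ℂ) • K) :=
    Function.LeftInverse.injective (g := Tinv) fun h => congr($hTinv₁ h)
  have hshift : ∀ h, (A + B + lam • K) h = 0 ↔
      (A + B + (τ : ℂ) • K) h = ((τ : ℂ) - lam) • K h :=
    LinearMap.add_smul_apply_eq_zero_iff (A + B : H →L[ℂ] H).toLinearMap K lam τ
  simp only [hshift]
  exact exists_ne_zero_apply_eq_smul_iff_exists_ne_zero_smul_eq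
    (T := (A + B + (τ : ℂ) • K).toLinearMap) (K := K.toLinearMap) (t := t.toLinearMap)
    (S := S.toLinearMap) (a := (ContinuousLinearMap.adjoint t).toLinearMap) hT hK hTS _

/-- With `𝔸+𝔹+τ𝕂` invertible and `ℛ = t ∘ S` the (compact) solution operator
on `L²(∂D∖Γ)`, `λ` is an eigenvalue of `(𝔸+𝔹+λ𝕂)h = 0, h ≠ 0` iff `(τ−λ)ℛθ = θ` for some
nonzero `θ`; i.e. `1/(τ−λ)` is an eigenvalue of the compact operator `ℛ`. -/
theorem stmt_5
    {H G : Type*} [NormedAddCommGroup H] [InnerProductSpace ℂ H] [CompleteSpace H]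
    [NormedAddCommGroup G] [InnerProductSpace ℂ G] [CompleteSpace G]
    (A B K : H →L[ℂ] H)
    (t : H →L[ℂ] G)  -- trace map V₀(D) → L²(∂D∖Γ), compact
    (ht : IsCompactOperator ⇑t)
    (hKdef : ∀ h φ : H, (inner ℂ φ (K h) : ℂ) = (inner ℂ (t φ) (t h) : ℂ))
    (τ : ℝ) (hτ : 0 < τ)
    (Tinv : H →L[ℂ] H)
    (hTinv₁ : Tinv.comp (A + B + (τ : ℂ) • K) = ContinuousLinearMap.id ℂ H)
    (hTinv₂ : (A + B + (τ : ℂ) • K).comp Tinv = ContinuousLinearMap.id ℂ H)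
    (S : G →L[ℂ] H)  -- solution operator θ ↦ h_θ
    (hS : ∀ (θ : G) (φ : H),
      (inner ℂ φ ((A + B + (τ : ℂ) • K) (S θ)) : ℂ) = (inner ℂ (t φ) θ : ℂ))
    (R : G →L[ℂ] G) (hR : R = t.comp S) :  -- ℛ : θ ↦ h_θ|_{∂D∖Γ}
    IsCompactOperator ⇑R ∧
    ∀ lam : ℂ,
      (∃ h : H, h ≠ 0 ∧ (A + B + lam • K) h = 0) ↔
      (∃ θ : G, θ ≠ 0 ∧ ((τ : ℂ) - lam) • R θ = θ) :=
  stmt_5_general A B K t ht hKdef τ Tinv hTinv₁ S hS R hR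
end

section
/- Under the assumptions that β is real-valued (so the associated operator ℛ on L²(∂D∖Γ) is compact and self-adjoint), all eigenvalues λ of the eigenvalue problem (𝔸+𝔹+λ𝕂)h = 0 are real, and there is an infinite sequence {λ_j}_{j≥1} of real eigenvalues with |λ_j| → ∞, since the nonzero eigenvalues 1/(τ−λ_j) of the compact self-adjoint operator ℛ are real, form an infinite sequence, and accumulate only at 0. -/
/-!
`λ` is an eigenvalue of the problem iff `(τ - λ)⁻¹` is an eigenvalue of `ℛ`, so every `λ` is real
because `ℛ` is self-adjoint. Unit eigenvectors of `ℛ` for distinct eigenvalues are orthogonal, so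
for eigenvalues of modulus `≥ ε` their images under `ℛ` are `ε`-separated; compactness of `ℛ`
allows only finitely many of them. Hence every ball contains finitely many `λ`, and an infinite set
of them contains a sequence tending to infinity.
-/

open Filter Module End

theorem IsCompactOperator.exists_ne_dist_lt {𝕜 E F : Type*} [NontriviallyNormedField 𝕜]
    [SeminormedAddCommGroup E] [NormedSpace 𝕜 E] [NormedAddCommGroup F] [NormedSpace 𝕜 F]
    {T : E →ₗ[𝕜] F} (hT : IsCompactOperator T) {x : ℕ → E} {r : ℝ} (hx : ∀ n, ‖x n‖ ≤ r)
    {ε : ℝ} (hε : 0 < ε) : ∃ m n, m ≠ n ∧ dist (T (x m)) (T (x n)) < ε := by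
  obtain ⟨K, hK, hTK⟩ := hT.image_closedBall_subset_compact r
  have hxK : ∀ n, T (x n) ∈ K := fun n => hTK ⟨x n, mem_closedBall_zero_iff.mpr (hx n), rfl⟩
  obtain ⟨_, _, φ, hφ, hlim⟩ := hK.tendsto_subseq hxK
  obtain ⟨N, hN⟩ := Metric.cauchySeq_iff.mp hlim.cauchySeq ε hε
  exact ⟨φ N, φ (N + 1), hφ.injective.ne N.succ_ne_self.symm, hN N le_rfl (N + 1) N.le_succ⟩

theorem norm_le_dist_of_inner_eq_zero {𝕜 E : Type*} [RCLike 𝕜] [NormedAddCommGroup E]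
    [InnerProductSpace 𝕜 E] {x y : E} (h : inner 𝕜 x y = 0) : ‖x‖ ≤ dist x y := by
  rw [dist_eq_norm, ← sq_le_sq₀ (norm_nonneg _) (norm_nonneg _), norm_sub_sq (𝕜 := 𝕜), h,
    map_zero, mul_zero, sub_zero]
  exact le_add_of_nonneg_right (sq_nonneg _)

theorem Module.End.HasEigenvalue.exists_hasEigenvector_norm_eq_one {𝕜 E : Type*} [RCLike 𝕜]
    [NormedAddCommGroup E] [NormedSpace 𝕜 E] {T : End 𝕜 E} {μ : 𝕜} (hμ : T.HasEigenvalue μ) :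
    ∃ e, T.HasEigenvector μ e ∧ ‖e‖ = 1 := by
  obtain ⟨v, hv, hv0⟩ := hμ.exists_hasEigenvector
  refine ⟨(‖v‖⁻¹ : 𝕜) • v, ⟨Submodule.smul_mem _ _ hv, ?_⟩, norm_smul_inv_norm hv0⟩
  exact smul_ne_zero (by simpa using hv0) hv0

theorem IsCompactOperator.finite_setOf_hasEigenvalue_le_norm {𝕜 E : Type*} [RCLike 𝕜]
    [NormedAddCommGroup E] [InnerProductSpace 𝕜 E] {T : E →L[𝕜] E} (hT : IsCompactOperator T)
    (hTs : (T : E →ₗ[𝕜] E).IsSymmetric) {ε : ℝ} (hε : 0 < ε) :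
    {μ : 𝕜 | HasEigenvalue (T : End 𝕜 E) μ ∧ ε ≤ ‖μ‖}.Finite := by
  by_contra hinf
  let μ := (Set.not_finite.mp hinf).natEmbedding
  choose e he he1 using fun n => (μ n).2.1.exists_hasEigenvector_norm_eq_one
  have hTe : ∀ n, T (e n) = (μ n : 𝕜) • e n := fun n => mem_eigenspace_iff.mp (he n).1
  have hsep : ∀ m n, m ≠ n → ε ≤ dist (T (e m)) (T (e n)) := by
    intro m n hmn
    have horth : inner 𝕜 (e m) (e n) = 0 :=
      hTs.orthogonalFamily_eigenspaces (Subtype.coe_injective.ne (μ.injective.ne hmn))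
        ⟨e m, (he m).1⟩ ⟨e n, (he n).1⟩
    have hTorth : inner 𝕜 (T (e m)) (T (e n)) = 0 := by
      rw [hTe, hTe, inner_smul_left, inner_smul_right, horth, mul_zero, mul_zero]
    calc ε ≤ ‖(μ m : 𝕜)‖ := (μ m).2.2
      _ = ‖T (e m)‖ := by rw [hTe, norm_smul, he1, mul_one]
      _ ≤ dist (T (e m)) (T (e n)) := norm_le_dist_of_inner_eq_zero hTorth
  obtain ⟨m, n, hmn, hlt⟩ :=
    IsCompactOperator.exists_ne_dist_lt (T := (T : E →ₗ[𝕜] E)) hT (fun n => (he1 n).le) hε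
  exact (hsep m n hmn).not_gt hlt

theorem Set.Infinite.exists_seq_tendsto_norm_atTop {E : Type*} [Norm E] {s : Set E}
    (hs : s.Infinite) (hbdd : ∀ M : ℝ, {x ∈ s | ‖x‖ ≤ M}.Finite) :
    ∃ f : ℕ → E, (∀ n, f n ∈ s) ∧ Tendsto (fun n => ‖f n‖) atTop atTop := by
  have hlarge : ∀ n : ℕ, ∃ x ∈ s, (n : ℝ) ≤ ‖x‖ := by
    intro n
    by_contra! h
    exact hs ((hbdd n).subset fun x hx => ⟨hx, (h x hx).le⟩)
  choose f hfs hf using hlarge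
  exact ⟨f, hfs, tendsto_atTop_mono hf tendsto_natCast_atTop_atTop⟩

theorem Module.End.hasEigenvalue_inv_of_smul_apply_eq_self {K V : Type*} [Field K]
    [AddCommGroup V] [Module K V] {T : End K V} {c : K} {x : V} (hx : x ≠ 0)
    (h : c • T x = x) : T.HasEigenvalue c⁻¹ := by
  refine hasEigenvalue_of_hasEigenvector ⟨mem_eigenspace_iff.mpr ?_, hx⟩
  rwa [eq_inv_smul_iff₀ (left_ne_zero_of_smul (h ▸ hx))]

/-- If `β` is real so that `ℛ` is compact and self-adjoint, all eigenvalues `λ`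
of the problem are real, and there is an infinite sequence of real eigenvalues with
`|λ_j| → ∞` (the eigenvalues `1/(τ−λ_j)` of `ℛ` are real and accumulate only at `0`). -/
theorem stmt_6
    {G : Type*} [NormedAddCommGroup G] [InnerProductSpace ℂ G] [CompleteSpace G]
    (R : G →L[ℂ] G) (hRc : IsCompactOperator ⇑R) (hRsa : IsSelfAdjoint R)
    (τ : ℝ)
    (P : ℂ → Prop)  -- "λ is an eigenvalue of (𝔸+𝔹+λ𝕂)h = 0, h ≠ 0"
    (hcorr : ∀ lam : ℂ, P lam ↔ ∃ θ : G, θ ≠ 0 ∧ ((τ : ℂ) - lam) • R θ = θ)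
    (hinf : {lam : ℂ | P lam}.Infinite) :  -- ℛ has infinitely many nonzero eigenvalues
    (∀ lam : ℂ, P lam → lam.im = 0) ∧
    ∃ f : ℕ → ℂ, (∀ n, P (f n) ∧ (f n).im = 0) ∧
      Filter.Tendsto (fun n => ‖f n‖) Filter.atTop Filter.atTop := by
  have heig : ∀ lam, P lam → (τ : ℂ) - lam ≠ 0 ∧ HasEigenvalue (R : End ℂ G) ((τ : ℂ) - lam)⁻¹ :=
    fun lam hlam => by
      obtain ⟨θ, hθ, hRθ⟩ := (hcorr lam).mp hlam
      exact ⟨left_ne_zero_of_smul (hRθ ▸ hθ), hasEigenvalue_inv_of_smul_apply_eq_self hθ hRθ⟩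
  have hreal : ∀ lam, P lam → lam.im = 0 := fun lam hlam => by
    have h := hRsa.isSymmetric.conj_eigenvalue_eq_self (heig lam hlam).2
    rw [map_inv₀, inv_inj, Complex.conj_eq_iff_im] at h
    simpa using h
  have hbdd : ∀ M : ℝ, {lam ∈ {lam | P lam} | ‖lam‖ ≤ M}.Finite := fun M => by
    have hε : 0 < (1 + |τ| + |M|)⁻¹ := by positivity
    refine ((hRc.finite_setOf_hasEigenvalue_le_norm hRsa.isSymmetric hε).preimage
      (inv_injective.comp (sub_right_injective (b := (τ : ℂ)))).injOn).subset ?_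
    rintro lam ⟨hlam, hM⟩
    obtain ⟨hc, hμ⟩ := heig lam hlam
    refine ⟨hμ, ?_⟩
    rw [Function.comp_apply, norm_inv]
    refine inv_anti₀ (norm_pos_iff.mpr hc) ?_
    calc ‖(τ : ℂ) - lam‖ ≤ ‖(τ : ℂ)‖ + ‖lam‖ := norm_sub_le _ _
      _ ≤ 1 + |τ| + |M| := by
        rw [Complex.norm_real, Real.norm_eq_abs]; linarith [le_abs_self M]
  obtain ⟨f, hfP, hf⟩ := hinf.exists_seq_tendsto_norm_atTop hbdd
  exact ⟨hreal, f, fun n => ⟨hfP n, hreal _ (hfP n)⟩, hf⟩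
end

section
/- Assume β real, Im(β)=0, and assume k² is not an eigenvalue of the problem Δu + k²u = 0 in D, ∂u/∂ν = −(1/4)(−∇_Γ·μ∇_Γ + k²β + 4/α)u on Γ, u = 0 on ∂D∖Γ. Then the eigenvalue problem (with Robin parameter λ on ∂D∖Γ) has at most finitely many positive eigenvalues λ. Proof strategy: if λ_j → +∞ with normalized eigenfunctions ‖h_j‖_{H¹(D)} + ‖h_j‖_{H¹(Γ)} = 1, the variational identity forces h_j → 0 in L²(∂D∖Γ), a weak limit h solves the excluded problem so h = 0, and then the identity forces ‖∇h_j‖_{L²(D)}, ‖∇_Γ h_j‖_{L²(Γ)} → 0, contradicting normalization. -/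
/-!
Eigenvectors `h_i` of the pencil `A + B + λ K` for distinct real `λ_i` have pairwise orthogonal
traces `t h_i`, by self-adjointness of `A + B`; the traces are nonzero because `k²` is excluded,
so the `h_i` are linearly independent. On their span the form
`⟪v, (A + B) v⟫ = -∑ λ_i |g_i|² ‖t h_i‖²` is nonpositive once all `λ_i > 0`. But the span of an
infinite independent family contains an orthonormal sequence `u_n` (Gram–Schmidt), and along it
`re ⟪u_n, A u_n⟫ ≥ c` while `⟪u_n, B u_n⟫ → 0` by compactness of `B`.
-/

open Filter Topology Set InnerProductSpace

section

variable {𝕜 E : Type*} [RCLike 𝕜] [NormedAddCommGroup E] [InnerProductSpace 𝕜 E]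

local notation "⟪" x ", " y "⟫" => inner 𝕜 x y

theorem Orthonormal.tendsto_inner_atTop_zero {u : ℕ → E} (hu : Orthonormal 𝕜 u) (y : E) :
    Tendsto (fun n => ⟪u n, y⟫) atTop (𝓝 0) := by
  have hsq : Tendsto (fun n => ‖⟪u n, y⟫‖ ^ 2) atTop (𝓝 0) :=
    (hu.inner_products_summable y).tendsto_atTop_zero
  rw [tendsto_zero_iff_norm_tendsto_zero]
  simpa using hsq.sqrt

theorem IsCompactOperator.tendsto_inner_apply_self_of_orthonormal {B : E →L[𝕜] E}
    (hB : IsCompactOperator B) {u : ℕ → E} (hu : Orthonormal 𝕜 u) :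
    Tendsto (fun n => ⟪u n, B (u n)⟫) atTop (𝓝 0) := by
  refine tendsto_of_subseq_tendsto fun ns hns => ?_
  have hbdd : Bornology.IsBounded (range u) :=
    isBounded_iff_forall_norm_le.2 ⟨1, by rintro _ ⟨n, rfl⟩; exact (hu.1 n).le⟩
  obtain ⟨C, hC, hBC⟩ := hB.image_subset_compact_of_bounded (f := (B : E →ₗ[𝕜] E)) hbdd
  obtain ⟨y, -, φ, hφ, hBy⟩ :=
    hC.tendsto_subseq fun n => hBC ⟨u (ns n), mem_range_self _, rfl⟩
  refine ⟨φ, ?_⟩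
  have hsub : Tendsto (ns ∘ φ) atTop atTop := hns.comp hφ.tendsto_atTop
  have hrest : Tendsto (fun k => ⟪u (ns (φ k)), B (u (ns (φ k))) - y⟫) atTop (𝓝 0) := by
    refine squeeze_zero_norm (fun k => ?_) (tendsto_iff_norm_sub_tendsto_zero.1 hBy)
    simpa [hu.1] using norm_inner_le_norm (𝕜 := 𝕜) (u (ns (φ k))) (B (u (ns (φ k))) - y)
  simpa [inner_sub_right] using ((hu.tendsto_inner_atTop_zero y).comp hsub).add hrest

section Coercive

variable {A B : E →L[𝕜] E} {c : ℝ}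

theorem Orthonormal.eventually_re_inner_add_apply_pos (hc : 0 < c)
    (hA : ∀ x, c * ‖x‖ ^ 2 ≤ RCLike.re ⟪x, A x⟫) (hB : IsCompactOperator B) {u : ℕ → E}
    (hu : Orthonormal 𝕜 u) : ∀ᶠ n in atTop, 0 < RCLike.re ⟪u n, (A + B) (u n)⟫ := by
  have hBre : Tendsto (fun n => RCLike.re ⟪u n, B (u n)⟫) atTop (𝓝 0) := by
    have := (RCLike.continuous_re.tendsto 0).comp (hB.tendsto_inner_apply_self_of_orthonormal hu)
    rwa [map_zero] at this
  filter_upwards [hBre.eventually_const_lt (neg_lt_zero.2 hc)] with n hn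
  have hAn := hA (u n)
  rw [hu.1 n, one_pow, mul_one] at hAn
  rw [add_apply, inner_add_right, map_add]
  linarith

theorem LinearIndependent.exists_mem_span_re_inner_add_apply_pos (hc : 0 < c)
    (hA : ∀ x, c * ‖x‖ ^ 2 ≤ RCLike.re ⟪x, A x⟫) (hB : IsCompactOperator B) {f : ℕ → E}
    (hf : LinearIndependent 𝕜 f) :
    ∃ v ∈ Submodule.span 𝕜 (range f), 0 < RCLike.re ⟪v, (A + B) v⟫ := by
  have hmem : ∀ n, gramSchmidtNormed 𝕜 f n ∈ Submodule.span 𝕜 (range f) := fun n => by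
    rw [← span_gramSchmidt 𝕜 f, ← span_gramSchmidtNormed_range]
    exact Submodule.subset_span (mem_range_self n)
  obtain ⟨n, hn⟩ :=
    ((gramSchmidtNormed_orthonormal hf).eventually_re_inner_add_apply_pos hc hA hB).exists
  exact ⟨_, hmem n, hn⟩

end Coercive

section Pencil

variable {G : Type*} [NormedAddCommGroup G] [InnerProductSpace 𝕜 G]
  {T K : E →L[𝕜] E} {t : E →L[𝕜] G}

theorem inner_apply_eq_of_add_smul_apply_eq_zero (hK : ∀ x y, ⟪y, K x⟫ = ⟪t y, t x⟫)
    {lam : ℝ} {x : E} (hx : (T + (lam : 𝕜) • K) x = 0) (y : E) :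
    ⟪y, T x⟫ = -(lam : 𝕜) * ⟪t y, t x⟫ := by
  rw [add_apply, smul_apply] at hx
  rw [eq_neg_of_add_eq_zero_left hx, inner_neg_right, inner_smul_right, hK, neg_mul]

theorem apply_eq_zero_of_add_smul_apply_eq_zero (hK : ∀ x y, ⟪y, K x⟫ = ⟪t y, t x⟫)
    {lam : ℝ} {x : E} (hx : (T + (lam : 𝕜) • K) x = 0) (htx : t x = 0) : T x = 0 :=
  ext_inner_left 𝕜 fun y => by
    rw [inner_apply_eq_of_add_smul_apply_eq_zero hK hx, htx, inner_zero_right, mul_zero,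
      inner_zero_right]

theorem inner_eq_zero_of_add_smul_apply_eq_zero (hT : (T : E →ₗ[𝕜] E).IsSymmetric)
    (hK : ∀ x y, ⟪y, K x⟫ = ⟪t y, t x⟫) {lam mu : ℝ} (hne : lam ≠ mu) {x y : E}
    (hx : (T + (lam : 𝕜) • K) x = 0) (hy : (T + (mu : 𝕜) • K) y = 0) :
    ⟪t x, t y⟫ = 0 := by
  have hTxy : ⟪T x, y⟫ = -(lam : 𝕜) * ⟪t x, t y⟫ := by
    rw [← inner_conj_symm, inner_apply_eq_of_add_smul_apply_eq_zero hK hx, map_mul, map_neg,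
      RCLike.conj_ofReal, inner_conj_symm]
  have hxTy := inner_apply_eq_of_add_smul_apply_eq_zero hK hy x
  have hsymm : ⟪T x, y⟫ = ⟪x, T y⟫ := hT x y
  have hdiff : ((lam : 𝕜) - mu) * ⟪t x, t y⟫ = 0 := by
    linear_combination hTxy - hxTy - hsymm
  exact (mul_eq_zero.1 hdiff).resolve_left (sub_ne_zero.2 (RCLike.ofReal_injective.ne hne))

theorem inner_sum_smul_apply_sum_smul {ι : Type*} {lam : ι → ℝ} {h : ι → E}
    (hK : ∀ x y, ⟪y, K x⟫ = ⟪t y, t x⟫) (hh : ∀ i, (T + (lam i : 𝕜) • K) (h i) = 0)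
    (horth : Pairwise fun i j => ⟪t (h i), t (h j)⟫ = 0) (s : Finset ι) (g : ι → 𝕜) :
    ⟪∑ i ∈ s, g i • h i, T (∑ i ∈ s, g i • h i)⟫
      = -((∑ i ∈ s, lam i * ‖g i‖ ^ 2 * ‖t (h i)‖ ^ 2 : ℝ) : 𝕜) := by
  set v := ∑ i ∈ s, g i • h i
  have htv : ∀ i ∈ s, ⟪t v, t (h i)⟫ = (starRingEnd 𝕜) (g i) * (‖t (h i)‖ : 𝕜) ^ 2 := by
    intro i hi
    simp only [v, map_sum, map_smul, sum_inner, inner_smul_left]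
    rw [Finset.sum_eq_single_of_mem i hi fun j _ hji => by rw [horth hji, mul_zero],
      inner_self_eq_norm_sq_to_K]
  have hTv : T v = ∑ i ∈ s, g i • T (h i) := by simp only [v, map_sum, map_smul]
  rw [hTv, inner_sum]
  push_cast
  rw [← Finset.sum_neg_distrib]
  refine Finset.sum_congr rfl fun i hi => ?_
  rw [inner_smul_right, inner_apply_eq_of_add_smul_apply_eq_zero hK (hh i), htv i hi,
    ← RCLike.conj_mul]
  ring

theorem re_inner_apply_nonpos_of_mem_span {ι : Type*} {lam : ι → ℝ} {h : ι → E}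
    (hK : ∀ x y, ⟪y, K x⟫ = ⟪t y, t x⟫) (hlam : ∀ i, 0 ≤ lam i)
    (hh : ∀ i, (T + (lam i : 𝕜) • K) (h i) = 0)
    (horth : Pairwise fun i j => ⟪t (h i), t (h j)⟫ = 0) {v : E}
    (hv : v ∈ Submodule.span 𝕜 (range h)) : RCLike.re ⟪v, T v⟫ ≤ 0 := by
  obtain ⟨g, rfl⟩ := Finsupp.mem_span_range_iff_exists_finsupp.1 hv
  rw [Finsupp.sum, inner_sum_smul_apply_sum_smul hK hh horth, map_neg, RCLike.ofReal_re,
    neg_nonpos]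
  exact Finset.sum_nonneg fun i _ => by have := hlam i; positivity

end Pencil

end

theorem stmt_7_general
    {H G : Type*} [NormedAddCommGroup H] [InnerProductSpace ℂ H] [CompleteSpace H]
    [NormedAddCommGroup G] [InnerProductSpace ℂ G] [CompleteSpace G]
    (A B K : H →L[ℂ] H)
    (t : H →L[ℂ] G)
    (c : ℝ) (hc : 0 < c)
    (hAcoer : ∀ h : H, c * ‖h‖ ^ 2 ≤ (inner ℂ h (A h) : ℂ).re)
    (hAsa : IsSelfAdjoint A) (hBsa : IsSelfAdjoint B)
    (hBc : IsCompactOperator ⇑B)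
    (hKdef : ∀ h φ : H, (inner ℂ φ (K h) : ℂ) = (inner ℂ (t φ) (t h) : ℂ))
    -- k² is not an eigenvalue of the excluded problem:
    (hexcl : ¬ ∃ h : H, h ≠ 0 ∧ (A + B) h = 0 ∧ t h = 0) :
    {lam : ℝ | 0 < lam ∧ ∃ h : H, h ≠ 0 ∧ (A + B + (lam : ℂ) • K) h = 0}.Finite := by
  refine Set.not_infinite.1 fun hinf => ?_
  let lam : ℕ → ℝ := fun n => hinf.natEmbedding _ n
  have hlam_inj : Function.Injective lam := fun _ _ hmn =>
    (hinf.natEmbedding _).injective (Subtype.ext hmn)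
  choose h hh0 hh using fun n => (hinf.natEmbedding _ n).2.2
  have htr : ∀ n, t (h n) ≠ 0 := fun n htn =>
    hexcl ⟨h n, hh0 n, apply_eq_zero_of_add_smul_apply_eq_zero hKdef (hh n) htn, htn⟩
  have horth : Pairwise fun m n => inner ℂ (t (h m)) (t (h n)) = 0 := fun m n hmn =>
    inner_eq_zero_of_add_smul_apply_eq_zero (hAsa.add hBsa).isSymmetric hKdef (hlam_inj.ne hmn)
      (hh m) (hh n)
  have hlin : LinearIndependent ℂ h :=
    (linearIndependent_of_ne_zero_of_inner_eq_zero htr horth).of_comp (t : H →ₗ[ℂ] G)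
  obtain ⟨v, hv, hpos⟩ := hlin.exists_mem_span_re_inner_add_apply_pos hc hAcoer hBc
  exact hpos.not_ge (re_inner_apply_nonpos_of_mem_span hKdef
    (fun n => (hinf.natEmbedding _ n).2.1.le) hh horth hv)

/-- Assume `β` real (self-adjoint setting) and that `k²` is not an eigenvalue
of the excluded mixed Dirichlet/generalized-impedance problem (abstractly: no nonzero `h`
with `(𝔸+𝔹)h = 0` and vanishing trace on `∂D∖Γ`). Then the eigenvalue problem
`(𝔸+𝔹+λ𝕂)h = 0` has at most finitely many positive eigenvalues `λ`. -/
theorem stmt_7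
    {H G : Type*} [NormedAddCommGroup H] [InnerProductSpace ℂ H] [CompleteSpace H]
    [NormedAddCommGroup G] [InnerProductSpace ℂ G] [CompleteSpace G]
    (A B K : H →L[ℂ] H)
    (t : H →L[ℂ] G) (ht : IsCompactOperator ⇑t)  -- compact trace onto L²(∂D∖Γ)
    (c : ℝ) (hc : 0 < c)
    (hAcoer : ∀ h : H, c * ‖h‖ ^ 2 ≤ (inner ℂ h (A h) : ℂ).re)
    (hAsa : IsSelfAdjoint A) (hBsa : IsSelfAdjoint B) (hKsa : IsSelfAdjoint K)
    (hBc : IsCompactOperator ⇑B)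
    (hKdef : ∀ h φ : H, (inner ℂ φ (K h) : ℂ) = (inner ℂ (t φ) (t h) : ℂ))
    -- k² is not an eigenvalue of the excluded problem:
    (hexcl : ¬ ∃ h : H, h ≠ 0 ∧ (A + B) h = 0 ∧ t h = 0) :
    {lam : ℝ | 0 < lam ∧ ∃ h : H, h ≠ 0 ∧ (A + B + (lam : ℂ) • K) h = 0}.Finite :=
  stmt_7_general A B K t c hc hAcoer hAsa hBsa hBc hKdef hexcl
end

section
/- Let β₁, β₂ ∈ C(Γ) be complex-valued and μ₁, μ₂ ∈ C¹(Γ). If −∇_Γ·(μ₁−μ₂)∇_Γφ + k²(β₁−β₂)φ = 0 on Γ for every φ ∈ V₀(Γ), then β₁ = β₂ on Γ. Proof: for any interior point y₀ ∈ Γ choose φ smooth with φ ≡ 1 on B_{ρ/4}(y₀)∩Γ and φ ≡ 0 outside B_{ρ/2}(y₀)∩Γ; on B_{ρ/8}(y₀)∩Γ the gradient term vanishes, giving k²(β₁−β₂) = 0 there, and continuity plus arbitrariness of y₀ gives β₁ = β₂ everywhere. -/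
open Filter Topology

theorem eq_at_of_eventually_eq_one {Γ : Type*} [TopologicalSpace Γ] {k : ℝ} (hk : k ≠ 0)
    {β₁ β₂ φ : Γ → ℂ} {Lφ : Γ → ℂ} {x : Γ} (hφx : φ x = 1) (hφ : ∀ᶠ y in 𝓝 x, φ y = 1)
    (hlocal : (∀ᶠ y in 𝓝 x, φ y = φ x) → Lφ x = 0)
    (heq : Lφ x + (k ^ 2 : ℂ) * (β₁ x - β₂ x) * φ x = 0) :
    β₁ x = β₂ x := by
  have hLφ : Lφ x = 0 := hlocal (by simpa only [hφx] using hφ)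
  rw [hLφ, hφx, zero_add, mul_one] at heq
  have hk2 : (k ^ 2 : ℂ) ≠ 0 := pow_ne_zero 2 (Complex.ofReal_ne_zero.mpr hk)
  exact sub_eq_zero.mp ((mul_eq_zero.mp heq).resolve_left hk2)

/-- If `−∇_Γ·(μ₁−μ₂)∇_Γφ + k²(β₁−β₂)φ = 0` pointwise on `Γ` for every
`φ ∈ V₀(Γ)` (the divergence-form operator `L` being local: it vanishes at points where `φ`
is locally constant, and `V₀(Γ)` containing bump functions equal to `1` near each interior
point), then `β₁ = β₂` on `Γ` by continuity and density of the interior. -/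
theorem stmt_14
    {Γ : Type*} [TopologicalSpace Γ]
    (k : ℝ) (hk : 0 < k)
    (β₁ β₂ : Γ → ℂ) (hβ₁ : Continuous β₁) (hβ₂ : Continuous β₂)
    (U : Set Γ) (hU : Dense U)  -- the (dense) interior of Γ
    (Adm : Set (Γ → ℂ))  -- the space V₀(Γ) of admissible test functions
    (L : (Γ → ℂ) → Γ → ℂ)  -- φ ↦ −∇_Γ·(μ₁−μ₂)∇_Γφ
    -- locality of the divergence-form operator:
    (hlocal : ∀ φ ∈ Adm, ∀ x : Γ, (∀ᶠ y in nhds x, φ y = φ x) → L φ x = 0)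
    -- bump functions equal to 1 near each interior point:
    (hbump : ∀ x ∈ U, ∃ φ ∈ Adm, φ x = 1 ∧ ∀ᶠ y in nhds x, φ y = 1)
    -- the hypothesis of the statement:
    (heq : ∀ φ ∈ Adm, ∀ x : Γ, L φ x + (k ^ 2 : ℂ) * (β₁ x - β₂ x) * φ x = 0) :
    ∀ x : Γ, β₁ x = β₂ x := by
  have h_on_U : Set.EqOn β₁ β₂ U := fun x hx => by
    obtain ⟨φ, hφA, hφx, hφ⟩ := hbump x hx
    exact eq_at_of_eventually_eq_one hk.ne' hφx hφ (hlocal φ hφA x) (heq φ hφA x)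
  exact congrFun (hβ₁.ext_on hU hβ₂ h_on_U)
end
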